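/- Under the stated setup, for every I in the domain with Q(H(I)/N) > 0 and ∫₀^{Q(H(I)/N)} F(γ) dγ > 0, both cost functions are differentiable at I and their derivatives satisfy 0 < (C^L)'(I) < (C^VCG)'(I). In particular, the marginal cost of accuracy under the Lindahl (perfect price discrimination) procurement mechanism is everywhere strictly positive and strictly below the marginal cost under the VCG procurement mechanism. -/

import Mathlib

/-!
Write `u = H(I)/N`, `q = Q(u)`, `A = ∫₀^q γ f` and `B = ∫₀^q F`. Since `H' = N/k`, `ε' = ε/(1-I)`
and, by the inverse function rule `f(q) Q'(u) = 1`, `d/dI ∫₀^{Q(H/N)} γ f = q/k`, the two marginal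
costs are `Nε (q/k + A/(1-I))` and `Nε (Q'(u) u/k + q/k + q u/(1-I))`. Integration by parts gives
`A = q u - B`, and `F ≤ F(q) = u` on `[0, q]` gives `B ≤ q u`; so `A ≥ 0`, and the difference of the
two marginal costs is `Nε (Q'(u) u/k + B/(1-I)) > 0`.
-/

open Set Filter Topology MeasureTheory intervalIntegral
open scoped Interval

theorem HasDerivAt.mul_eq_one_of_eventually_leftInverse {F Q : ℝ → ℝ} {F' Q' u : ℝ}
    (hF : HasDerivAt F F' (Q u)) (hQ : HasDerivAt Q Q' u) (hFQ : ∀ᶠ x in 𝓝 u, F (Q x) = x) :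
    F' * Q' = 1 :=
  (hF.comp u hQ).unique ((hasDerivAt_id u).congr_of_eventuallyEq hFQ)

theorem ContinuousOn.hasDerivAt_integral_of_Ici {g : ℝ → ℝ} {a b : ℝ}
    (hg : ContinuousOn g (Ici a)) (hab : a < b) :
    HasDerivAt (fun y => ∫ x in a..y, g x) (g b) b :=
  integral_hasDerivAt_right ((hg.mono Icc_subset_Ici_self).intervalIntegrable_of_Icc hab.le)
    ((hg.mono Ioi_subset_Ici_self).stronglyMeasurableAtFilter isOpen_Ioi b hab)
    (hg.continuousAt (mem_of_superset (Ioi_mem_nhds hab) Ioi_subset_Ici_self))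

theorem hasDerivAt_integral_id_mul_comp_of_leftInverse {F f Q g : ℝ → ℝ} {Q' g' x : ℝ}
    (hF : HasDerivAt F (f (Q (g x))) (Q (g x))) (hf : ContinuousOn f (Ici 0))
    (hQ : HasDerivAt Q Q' (g x)) (hFQ : ∀ᶠ y in 𝓝 (g x), F (Q y) = y) (hg : HasDerivAt g g' x)
    (hQg : 0 < Q (g x)) :
    HasDerivAt (fun x => ∫ γ in (0 : ℝ)..Q (g x), γ * f γ) (Q (g x) * g') x := by
  have hinv : f (Q (g x)) * Q' = 1 := hF.mul_eq_one_of_eventually_leftInverse hQ hFQ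
  have hFTC :
      HasDerivAt (fun y => ∫ γ in (0 : ℝ)..y, γ * f γ) (Q (g x) * f (Q (g x))) (Q (g x)) :=
    ((continuousOn_id' _).mul hf).hasDerivAt_integral_of_Ici hQg
  have hcomp := hFTC.comp x (hQ.comp x hg)
  exact hcomp.congr_deriv (by linear_combination Q (g x) * g' * hinv)

theorem integral_id_mul_deriv_eq {F f : ℝ → ℝ} {a b : ℝ} (hab : a ≤ b)
    (hF : ∀ x ∈ Icc a b, HasDerivAt F (f x) x) (hf : IntervalIntegrable f volume a b) :
    ∫ x in a..b, x * f x = b * F b - a * F a - ∫ x in a..b, F x := by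
  rw [← uIcc_of_le hab] at hF
  have := integral_mul_deriv_eq_deriv_mul_of_hasDerivAt (u' := fun _ => 1) continuousOn_id
    (fun x hx => (hF x hx).continuousAt.continuousWithinAt) (fun x _ => hasDerivAt_id x)
    (fun x hx => hF x (Ioo_subset_Icc_self hx)) intervalIntegrable_const hf
  simpa only [one_mul, id] using this

theorem MonotoneOn.intervalIntegral_le_mul {F : ℝ → ℝ} {a b : ℝ} (hab : a ≤ b)
    (hF : MonotoneOn F (Icc a b)) : ∫ x in a..b, F x ≤ (b - a) * F b := by
  have hF' : MonotoneOn F [[a, b]] := by rwa [uIcc_of_le hab]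
  calc ∫ x in a..b, F x ≤ ∫ _ in a..b, F b :=
        integral_mono_on hab hF'.intervalIntegrable intervalIntegrable_const
          fun x hx => hF hx ⟨hab, le_rfl⟩ hx.2
    _ = (b - a) * F b := by rw [intervalIntegral.integral_const, smul_eq_mul]

theorem hasDerivAt_sub_one_sub_mul_div (N k x : ℝ) :
    HasDerivAt (fun x => N - (1 - x) * N / k) (N / k) x :=
  ((((hasDerivAt_id' x).const_sub 1).mul_const N).div_const k).const_sub N |>.congr_deriv
    (by ring)

theorem hasDerivAt_div_one_sub_mul {N : ℝ} (k : ℝ) (hN : N ≠ 0) {x : ℝ} (hx : 1 - x ≠ 0) :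
    HasDerivAt (fun x => k / ((1 - x) * N)) (k / ((1 - x) * N) / (1 - x)) x :=
  (hasDerivAt_const x k).div (((hasDerivAt_id' x).const_sub 1).mul_const N)
    (mul_ne_zero hx hN) |>.congr_deriv (by field_simp; ring)

theorem half_add_log_one_div_pos {β : ℝ} (h0 : 0 < β) (h1 : β ≤ 1) :
    0 < 1 / 2 + Real.log (1 / β) := by
  linarith [Real.log_nonneg (one_le_one_div h0 h1)]

theorem stmt_1_general (N β k : ℝ) (hN : 0 < N)
    (hβ : 0 < β ∧ β < 1 / (1 + Real.sqrt (Real.exp 1)))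
    (hk : k = 1 / 2 + Real.log (1 / β))
    (H ε : ℝ → ℝ)
    (hH : ∀ I, H I = N - (1 - I) * N / k)
    (hε : ∀ I, ε I = k / ((1 - I) * N))
    (F f Q Q' : ℝ → ℝ)
    (hFmono : StrictMonoOn F (Set.Ici 0))
    (hFderiv : ∀ γ ∈ Set.Ici (0 : ℝ), HasDerivAt F (f γ) γ)
    (hfcont : ContinuousOn f (Set.Ici 0))
    (hF0 : F 0 = 0)
    (hFQ : ∀ u ∈ Set.Ioo (0 : ℝ) 1, F (Q u) = u)
    (hQderiv : ∀ u ∈ Set.Ioo (0 : ℝ) 1, HasDerivAt Q (Q' u) u)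
    (hQ'pos : ∀ u ∈ Set.Ioo (0 : ℝ) 1, 0 < Q' u)
    (CVCG CL : ℝ → ℝ)
    (hCVCG : ∀ I, CVCG I = Q (H I / N) * H I * ε I)
    (hCL : ∀ I, CL I = N * (∫ γ in (0 : ℝ)..Q (H I / N), γ * f γ) * ε I)
    (I : ℝ) (hI : I ∈ Set.Ioo (0 : ℝ) 1)
    (hHI : H I / N ∈ Set.Ioo (0 : ℝ) 1)
    (hQpos : 0 < Q (H I / N))
    (hintpos : 0 < ∫ γ in (0 : ℝ)..Q (H I / N), F γ) :
    ∃ dL dV : ℝ, HasDerivAt CL dL I ∧ HasDerivAt CVCG dV I ∧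
      0 < dL ∧ dL < dV := by
  have hk0 : 0 < k := hk ▸ half_add_log_one_div_pos hβ.1 (hβ.2.le.trans
    (div_le_one_of_le₀ (by linarith [Real.sqrt_nonneg (Real.exp 1)]) (by positivity)))
  have ha : 0 < 1 - I := sub_pos.2 hI.2
  set u := H I / N with hu
  set q := Q u
  set A := ∫ γ in (0 : ℝ)..q, γ * f γ
  set B := ∫ γ in (0 : ℝ)..q, F γ
  have hFq : F q = u := hFQ u hHI
  have hAB : A = q * u - B := by
    have := integral_id_mul_deriv_eq hQpos.le (fun x hx => hFderiv x hx.1)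
      ((hfcont.mono Icc_subset_Ici_self).intervalIntegrable_of_Icc hQpos.le)
    rw [hFq, hF0] at this
    linarith
  have hBle : B ≤ q * u := by
    simpa only [sub_zero, hFq] using
      (hFmono.monotoneOn.mono Icc_subset_Ici_self).intervalIntegral_le_mul hQpos.le
  have hH' : HasDerivAt H (N / k) I := funext hH ▸ hasDerivAt_sub_one_sub_mul_div N k I
  have hu' : HasDerivAt (fun x => H x / N) (1 / k) I :=
    (hH'.div_const N).congr_deriv (by field_simp)
  have hε' : HasDerivAt ε (ε I / (1 - I)) I :=
    funext hε ▸ hasDerivAt_div_one_sub_mul k hN.ne' ha.ne'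
  have hA' : HasDerivAt (fun x => ∫ γ in (0 : ℝ)..Q (H x / N), γ * f γ) (q * (1 / k)) I :=
    hasDerivAt_integral_id_mul_comp_of_leftInverse (hFderiv q hQpos.le) hfcont (hQderiv u hHI)
      (eventually_of_mem (Ioo_mem_nhds hHI.1 hHI.2) hFQ) hu' hQpos
  have hQH : HasDerivAt (fun x => Q (H x / N)) (Q' u * (1 / k)) I := (hQderiv u hHI).comp I hu'
  have hHu : H I = N * u := by rw [hu]; field_simp
  have hNε : N * ε I = k / (1 - I) := by rw [hε]; field_simp
  refine ⟨N * ε I * (q / k + A / (1 - I)), N * ε I * (Q' u * u / k + q / k + q * u / (1 - I)),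
    ?_, ?_, ?_, ?_⟩
  · rw [funext hCL]
    exact (hA'.const_mul N).mul hε' |>.congr_deriv (by ring)
  · rw [funext hCVCG]
    exact (hQH.mul hH').mul hε' |>.congr_deriv
      (by simp only [Pi.mul_apply]; rw [hHu]; field_simp; ring)
  · have : 0 ≤ A / (1 - I) := div_nonneg (by linarith) ha.le
    have : 0 < q / k := div_pos hQpos hk0
    rw [hNε]
    positivity
  · have : 0 < Q' u * u / k := div_pos (mul_pos (hQ'pos u hHI) hHI.1) hk0
    have : A / (1 - I) < q * u / (1 - I) := div_lt_div_of_pos_right (by linarith) ha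
    rw [hNε]
    gcongr ?_ * ?_
    linarith

/-- Comparison of marginal costs: for every `I` in the domain with
`Q(H(I)/N) > 0` and `∫₀^{Q(H(I)/N)} F(γ) dγ > 0`, both the Lindahl cost
`C^L(I) = N·(∫₀^{Q(H(I)/N)} γ·f(γ) dγ)·ε(I)` and the VCG cost
`C^VCG(I) = Q(H(I)/N)·H(I)·ε(I)` are differentiable at `I`, and their
derivatives satisfy `0 < (C^L)′(I) < (C^VCG)′(I)`. -/
theorem stmt_1 (N β k : ℝ) (hN : 0 < N)
    (hβ : 0 < β ∧ β < 1 / (1 + Real.sqrt (Real.exp 1)))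
    (hk : k = 1 / 2 + Real.log (1 / β))
    (H ε : ℝ → ℝ)
    (hH : ∀ I, H I = N - (1 - I) * N / k)
    (hε : ∀ I, ε I = k / ((1 - I) * N))
    (F f Q Q' : ℝ → ℝ)
    (hFmono : StrictMonoOn F (Set.Ici 0))
    (hFderiv : ∀ γ ∈ Set.Ici (0 : ℝ), HasDerivAt F (f γ) γ)
    (hfcont : ContinuousOn f (Set.Ici 0))
    (hF0 : F 0 = 0)
    (hQnonneg : ∀ u ∈ Set.Ioo (0 : ℝ) 1, 0 ≤ Q u)
    (hFQ : ∀ u ∈ Set.Ioo (0 : ℝ) 1, F (Q u) = u)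
    (hQderiv : ∀ u ∈ Set.Ioo (0 : ℝ) 1, HasDerivAt Q (Q' u) u)
    (hQ'pos : ∀ u ∈ Set.Ioo (0 : ℝ) 1, 0 < Q' u)
    (CVCG CL : ℝ → ℝ)
    (hCVCG : ∀ I, CVCG I = Q (H I / N) * H I * ε I)
    (hCL : ∀ I, CL I = N * (∫ γ in (0 : ℝ)..Q (H I / N), γ * f γ) * ε I)
    (I : ℝ) (hI : I ∈ Set.Ioo (0 : ℝ) 1)
    (hHI : H I / N ∈ Set.Ioo (0 : ℝ) 1)
    (hQpos : 0 < Q (H I / N))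
    (hintpos : 0 < ∫ γ in (0 : ℝ)..Q (H I / N), F γ) :
    ∃ dL dV : ℝ, HasDerivAt CL dL I ∧ HasDerivAt CVCG dV I ∧
      0 < dL ∧ dL < dV :=
  stmt_1_general N β k hN hβ hk H ε hH hε F f Q Q' hFmono hFderiv hfcont hF0 hFQ hQderiv hQ'pos CVCG
    CL hCVCG hCL I hI hHI hQpos hintpos
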